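/- Let C : S² → ℝ be continuous and let ψ : ℝ × S² → ℝ be continuous with compact support. Define (D_C ψ)(u, n) := ψ(e^{−C(n)} u, n), and for a function φ : ℝ × S² → ℝ write φ̂(E, n) := (2π)^{-1/2} ∫_ℝ φ(u, n) e^{iEu} du. Then ∫_{S²} ∫_0^∞ E |(D_C ψ)^∧(E, n)|² dE dσ(n) = ∫_{S²} ∫_0^∞ E |ψ̂(E, n)|² dE dσ(n). -/

import Mathlib

open MeasureTheory Metric Filter
open scoped Topology InnerProductSpace

noncomputable section

/-- `E3` is Euclidean three-dimensional space. -/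
abbrev E3 : Type := EuclideanSpace ℝ (Fin 3)

/-- `S2` is the unit sphere in `E3`. -/
abbrev S2 : Type := Metric.sphere (0 : E3) 1

/-- The standard surface measure on the unit sphere `S²`. -/
def sphereMeasure : Measure S2 := (volume : Measure E3).toSphere

/-- The Fourier transform in the retarded coordinate `u` at fixed angle `n`:
`φ̂(E, n) = (2π)^{-1/2} ∫_ℝ φ(u, n) e^{iEu} du`. -/
def uhat (φ : ℝ × S2 → ℝ) (E : ℝ) (n : S2) : ℂ :=
  ((Real.sqrt (2 * Real.pi) : ℝ) : ℂ)⁻¹ *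
    ∫ u : ℝ, (φ (u, n) : ℂ) * Complex.exp (Complex.I * E * u)

/-! A dilation `u ↦ c u` of the retarded time acts on the Fourier side as the dilation
`E ↦ E / c` rescaled by `c⁻¹`, and this rescaled dilation is unitary on `L²(ℝ₊, E dE)`.
Both steps are changes of variables, applied angle by angle. -/

lemma uhat_dilation (ψ : ℝ × S2 → ℝ) (c : S2 → ℝ) {n : S2} (hc : 0 < c n) (E : ℝ) :
    uhat (fun p => ψ (c p.2 * p.1, p.2)) E n = (c n)⁻¹ • uhat ψ ((c n)⁻¹ * E) n := by
  have hsubst : ∫ u : ℝ, (ψ (c n * u, n) : ℂ) * Complex.exp (Complex.I * E * u)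
      = (c n)⁻¹ • ∫ x : ℝ, (ψ (x, n) : ℂ) * Complex.exp (Complex.I * ↑((c n)⁻¹ * E) * x) := by
    have h := Measure.integral_comp_mul_left
      (fun x : ℝ => (ψ (x, n) : ℂ) * Complex.exp (Complex.I * ↑((c n)⁻¹ * E) * x)) (c n)
    rw [abs_of_pos (inv_pos.mpr hc)] at h
    rw [← h]
    congr! 4 with u
    have : (c n : ℂ) ≠ 0 := by exact_mod_cast hc.ne'
    push_cast
    field_simp
  simp only [uhat, hsubst, Complex.real_smul]
  ring

lemma integral_Ioi_mul_norm_sq_dilation {F : Type*} [NormedAddCommGroup F] [NormedSpace ℝ F]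
    (g : ℝ → F) {c : ℝ} (hc : 0 < c) :
    ∫ E in Set.Ioi 0, E * ‖c⁻¹ • g (c⁻¹ * E)‖ ^ 2 = ∫ E in Set.Ioi 0, E * ‖g E‖ ^ 2 := by
  have hsubst := integral_comp_mul_left_Ioi
    (fun x : ℝ => c * x * ‖c⁻¹ • g x‖ ^ 2) 0 (inv_pos.mpr hc)
  simp only [mul_zero, mul_inv_cancel_left₀ hc.ne', smul_eq_mul, inv_inv] at hsubst
  rw [hsubst, ← integral_const_mul]
  refine setIntegral_congr_fun measurableSet_Ioi fun x _ => ?_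
  rw [norm_smul, Real.norm_of_nonneg (inv_pos.mpr hc).le]
  field_simp

theorem statement17_general (C : S2 → ℝ) (ψ : ℝ × S2 → ℝ) :
    (∫ n : S2,
        (∫ E in Set.Ioi (0 : ℝ),
          E * ‖uhat (fun p => ψ (Real.exp (-C p.2) * p.1, p.2)) E n‖ ^ 2)
      ∂sphereMeasure)
    = ∫ n : S2,
        (∫ E in Set.Ioi (0 : ℝ), E * ‖uhat ψ E n‖ ^ 2) ∂sphereMeasure := by
  refine integral_congr_ae (.of_forall fun n => ?_)
  have hc : 0 < Real.exp (-C n) := Real.exp_pos _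
  simp only [uhat_dilation ψ (fun n => Real.exp (-C n)) hc]
  exact integral_Ioi_mul_norm_sq_dilation (fun E => uhat ψ E n) hc

/-- The distorted (lightlike dilation
`(D_C ψ)(u, n) = ψ(e^{−C(n)} u, n)` preserves the squared norm in the one-particle space
`L²(ℝ₊ × S², E dE dσ)` of the boundary theory. -/
theorem statement17 (C : S2 → ℝ) (hC : Continuous C) (ψ : ℝ × S2 → ℝ)
    (hψ : Continuous ψ) (hsupp : HasCompactSupport ψ) :
    (∫ n : S2,
        (∫ E in Set.Ioi (0 : ℝ),
          E * ‖uhat (fun p => ψ (Real.exp (-C p.2) * p.1, p.2)) E n‖ ^ 2)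
      ∂sphereMeasure)
    = ∫ n : S2,
        (∫ E in Set.Ioi (0 : ℝ), E * ‖uhat ψ E n‖ ^ 2) ∂sphereMeasure :=
  statement17_general C ψ
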